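/- Fix a real β > 0. For every x with 0 < x < 1, the dual potential of the (d_l=3, d_r=4, d_g=3) precoded-rateless code satisfies U⊥(x, x₂⊥(x); ε⊥(x)) > 0, where U⊥(x₁,x₂;ε) = 3/β − (3/β)(1−x₁)³·e^{−βx₂} − (9/(4β))·(1 − (1−x₁)²·e^{−βx₂})⁴ − ε·(1 − (1−x₁)³·e^{−βx₂})³ − (9/β)·x₁(1−x₁)²·e^{−βx₂} − 3·x₂(1−x₁)³·e^{−βx₂}, x₂⊥(x) = −(1/β)·ln((1 − x^{1/3})/(1 − x)²), and ε⊥(x) = x₂⊥(x)/(1 − (1−x)³·exp(−β·x₂⊥(x)))². -/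

import Mathlib

/-!
Put `t = x^{1/3}`, so that `1 - x = (1 - t)(1 + t + t²)`. At the fixed point
`e^{-β x₂⊥} = (1 - t)/(1 - t³)²`, and the potential collapses to
`β U⊥ = P(t) - β x₂⊥ · Q(t)` with polynomials `P = 3t - 6t³ + 15t⁴/4` and
`Q = 3 - 2t - 2t³ + 2t⁴ > 0`, where `β x₂⊥ = log((1 - t³)²/(1 - t))`. It remains to bound this
logarithm from above by truncated Taylor series of `-log(1 - s)`: for `t ≤ 17/20` expand both
`log(1 - t³)` and `log(1 - t)` (the latter with its geometric tail), for `t ≥ 17/20` write it as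
`log(1 - t) + 2 log(1 + t + t²)` and use `1 + t + t² < 3`. In both cases what is left is a
polynomial inequality on an interval.
-/

/-- Potential function of the dual of the `(d_l = 3, d_r = 4, d_g = 3)`
precoded-rateless code with parameter `β > 0`. -/
noncomputable def dualPotential343 (β x₁ x₂ ε : ℝ) : ℝ :=
  3/β - (3/β) * (1 - x₁)^3 * Real.exp (-β*x₂)
    - (9/(4*β)) * (1 - (1 - x₁)^2 * Real.exp (-β*x₂))^4
    - ε * (1 - (1 - x₁)^3 * Real.exp (-β*x₂))^3
    - (9/β) * x₁ * (1 - x₁)^2 * Real.exp (-β*x₂)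
    - 3 * x₂ * (1 - x₁)^3 * Real.exp (-β*x₂)

/-- Second coordinate of the nontrivial DE fixed points of the dual code. -/
noncomputable def x₂perp343 (β x : ℝ) : ℝ :=
  -(1/β) * Real.log ((1 - x ^ ((1:ℝ)/3)) / (1 - x)^2)

/-- Erasure-probability coordinate of the nontrivial DE fixed points of the dual code. -/
noncomputable def εperp343 (β x : ℝ) : ℝ :=
  x₂perp343 β x / (1 - (1 - x)^3 * Real.exp (-β * x₂perp343 β x))^2

namespace Real

theorem sum_range_pow_div_le_neg_log_one_sub {t : ℝ} (h₀ : 0 ≤ t) (h₁ : t < 1) (n : ℕ) :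
    ∑ i ∈ Finset.range n, t ^ (i + 1) / (i + 1) ≤ -log (1 - t) :=
  sum_le_hasSum (Finset.range n) (fun i _ => by positivity)
    (hasSum_pow_div_log_of_abs_lt_one (by rwa [abs_of_nonneg h₀]))

theorem neg_log_one_sub_le_sum_range_add {t : ℝ} (h₀ : 0 ≤ t) (h₁ : t < 1) (n : ℕ) :
    -log (1 - t) ≤
      ∑ i ∈ Finset.range n, t ^ (i + 1) / (i + 1) + t ^ (n + 1) / ((n + 1) * (1 - t)) := by
  have htail := (hasSum_nat_add_iff' n).mpr
    (hasSum_pow_div_log_of_abs_lt_one (x := t) (by rwa [abs_of_nonneg h₀]))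
  have hgeom := (hasSum_geometric_of_lt_one h₀ h₁).mul_left (t ^ (n + 1) / (n + 1))
  have := hasSum_le (fun i => ?_) htail hgeom
  · rw [← div_div, div_eq_mul_inv _ (1 - t)]
    linarith
  · push_cast
    rw [div_mul_eq_mul_div, ← pow_add, show n + 1 + i = i + n + 1 by ring]
    gcongr
    linarith

end Real

open Real

/-- `β · U⊥(x, x₂⊥(x); ε⊥(x))` as a function of `t = x^{1/3}`. -/
noncomputable def fixedPointPotential343 (t : ℝ) : ℝ :=
  3*t - 6*t^3 + 15/4*t^4 - log ((1 - t^3)^2 / (1 - t)) * (3 - 2*t - 2*t^3 + 2*t^4)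

theorem dualPotential343_pow_three_of_exp_eq {β t x₂ : ℝ} (hβ : β ≠ 0) (ht0 : 0 < t)
    (ht1 : t < 1) (hexp : exp (-β * x₂) = (1 - t) / (1 - t^3)^2) :
    dualPotential343 β (t^3) x₂ (x₂ / (1 - (1 - t^3)^3 * exp (-β * x₂))^2)
      = (3*t - 6*t^3 + 15/4*t^4 - β * x₂ * (3 - 2*t - 2*t^3 + 2*t^4)) / β := by
  have h1t3 : 1 - t^3 ≠ 0 := (sub_pos.mpr (pow_lt_one₀ ht0.le ht1 three_ne_zero)).ne'
  have hD : 1 - (1 - t^3)^3 * ((1 - t) / (1 - t^3)^2) = t * (1 + t^2 - t^3) := by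
    field_simp
    ring
  have hD0 : t * (1 + t^2 - t^3) ≠ 0 := by
    have : t^3 < t^2 := pow_lt_pow_right_of_lt_one₀ ht0 ht1 (by norm_num)
    exact mul_ne_zero ht0.ne' (by linarith)
  rw [dualPotential343, hexp, hD]
  field_simp
  ring

section fixedPointPotential343

variable {t : ℝ}

theorem fixedPointPotential343_pos_of_le (ht0 : 0 < t) (ht : t ≤ 17/20) :
    0 < fixedPointPotential343 t := by
  have ht1 : t < 1 := by linarith
  have h1t : 0 < 1 - t := by linarith
  have ht3 : t^3 < 1 := pow_lt_one₀ ht0.le ht1 three_ne_zero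
  have hQ : 0 < 3 - 2*t - 2*t^3 + 2*t^4 := by nlinarith [mul_pos h1t (sub_pos.mpr ht3)]
  have hL : log ((1 - t^3)^2 / (1 - t))
      ≤ -2 * (t^3 + t^6/2) + (t + t^2/2 + t^3/3 + t^4/4) + t^5/(5*(1 - t)) := by
    have h3 := sum_range_pow_div_le_neg_log_one_sub (by positivity) ht3 2
    have h1 := neg_log_one_sub_le_sum_range_add ht0.le ht1 4
    simp only [Finset.sum_range_succ, Finset.sum_range_zero] at h3 h1
    norm_num at h3 h1
    rw [log_div (pow_ne_zero 2 (sub_pos.mpr ht3).ne') h1t.ne', log_pow]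
    push_cast
    ring_nf at h3 h1 ⊢
    linarith
  have hpoly : 0 < 3*t - 6*t^3 + 15/4*t^4
      - (-2 * (t^3 + t^6/2) + (t + t^2/2 + t^3/3 + t^4/4) + t^5/(5*(1 - t)))
        * (3 - 2*t - 2*t^3 + 2*t^4) := by
    rw [show 3*t - 6*t^3 + 15/4*t^4
      - (-2 * (t^3 + t^6/2) + (t + t^2/2 + t^3/3 + t^4/4) + t^5/(5*(1 - t)))
        * (3 - 2*t - 2*t^3 + 2*t^4)
      = (5/2*t^2 - 5/2*t^3 + 25/3*t^4 - 83/6*t^5 - 13/6*t^6 + 95/6*t^7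
          - 29/3*t^8 - 19/2*t^9 + 20*t^10 - 10*t^11) / (5*(1 - t)) by field_simp; ring]
    refine div_pos ?_ (by positivity)
    nlinarith [sq_nonneg t, sq_nonneg (1-t), mul_pos ht0 ht0, sq_nonneg (t*(1-t)),
      sq_nonneg (t^2*(1-t)), sq_nonneg (t^3*(1-t)), sq_nonneg (t^4*(1-t)),
      pow_pos ht0 5, pow_pos ht0 9, mul_pos (pow_pos ht0 9) h1t,
      sq_nonneg (t^4*(17/20-t)), sq_nonneg (t^3*(17/20-t))]
  unfold fixedPointPotential343
  nlinarith [mul_le_mul_of_nonneg_right hL hQ.le]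

theorem fixedPointPotential343_pos_of_ge (ht : 17/20 ≤ t) (ht1 : t < 1) :
    0 < fixedPointPotential343 t := by
  have ht0 : 0 < t := by linarith
  have h1t : 0 < 1 - t := by linarith
  have hQ : 0 < 3 - 2*t - 2*t^3 + 2*t^4 := by
    nlinarith [mul_pos h1t (sub_pos.mpr (pow_lt_one₀ ht0.le ht1 three_ne_zero))]
  have hL : log ((1 - t^3)^2 / (1 - t)) ≤ -(t + t^2/2 + t^3/3 + t^4/4) + 2 * 1.0986122888 := by
    have h1 := sum_range_pow_div_le_neg_log_one_sub ht0.le ht1 4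
    simp only [Finset.sum_range_succ, Finset.sum_range_zero] at h1
    norm_num at h1
    have h3 : log (1 + t + t^2) < 1.0986122888 :=
      (log_lt_log (by positivity) (by nlinarith)).trans log_three_lt_d9
    rw [show (1 - t^3)^2 / (1 - t) = (1 - t) * (1 + t + t^2)^2 by field_simp; ring,
      log_mul h1t.ne' (by positivity), log_pow]
    push_cast
    linarith
  unfold fixedPointPotential343
  nlinarith [mul_le_mul_of_nonneg_right hL hQ.le, sq_nonneg (1-t), sq_nonneg (t-17/20),
    mul_nonneg (sub_nonneg.mpr ht) h1t.le, sq_nonneg ((1-t)*(t-17/20)),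
    mul_nonneg (mul_nonneg (sub_nonneg.mpr ht) (sub_nonneg.mpr ht)) h1t.le,
    mul_nonneg (mul_nonneg (sub_nonneg.mpr ht) h1t.le) h1t.le]

end fixedPointPotential343

theorem stmt_11 (β : ℝ) (hβ : 0 < β) (x : ℝ) (hx0 : 0 < x) (hx1 : x < 1) :
    0 < dualPotential343 β x (x₂perp343 β x) (εperp343 β x) := by
  obtain ⟨t, ht0, ht1, rfl⟩ : ∃ t, 0 < t ∧ t < 1 ∧ t^3 = x :=
    ⟨x ^ ((1:ℝ)/3), rpow_pos_of_pos hx0 _, rpow_lt_one hx0.le hx1 (by norm_num), by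
      rw [one_div]; exact_mod_cast rpow_inv_natCast_pow hx0.le three_ne_zero⟩
  have hcbrt : (t^3) ^ ((1:ℝ)/3) = t := by
    rw [one_div]; exact_mod_cast pow_rpow_inv_natCast ht0.le three_ne_zero
  have h1t3 : 0 < 1 - t^3 := sub_pos.mpr (pow_lt_one₀ ht0.le ht1 three_ne_zero)
  have hlog : log ((1 - t^3)^2 / (1 - t)) = -log ((1 - t) / (1 - t^3)^2) := by
    rw [← log_inv, inv_div]
  have hβx₂ : β * x₂perp343 β (t^3) = log ((1 - t^3)^2 / (1 - t)) := by
    rw [x₂perp343, hcbrt, hlog]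
    field_simp
  have hexp : exp (-β * x₂perp343 β (t^3)) = (1 - t) / (1 - t^3)^2 := by
    rw [neg_mul, hβx₂, hlog, neg_neg, exp_log (div_pos (sub_pos.mpr ht1) (pow_pos h1t3 2))]
  rw [εperp343, dualPotential343_pow_three_of_exp_eq hβ.ne' ht0 ht1 hexp, hβx₂]
  refine div_pos ?_ hβ
  rcases le_total t (17/20) with ht | ht
  · exact fixedPointPotential343_pos_of_le ht0 ht
  · exact fixedPointPotential343_pos_of_ge ht ht1
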